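/- Let G be a group with the word metric coming from a finite generating set, and let A, B be subgroups of G. Then A and B are coarsely equivalent (i.e., each is coarsely contained in the other) if and only if A and B are commensurable, i.e., A ∩ B has finite index in both A and B. -/

import Mathlib

open Pointwise

/-- The word length of `g` with respect to the generating set `S`: the least `n` such that
`g` is a product of `n` elements of `S ∪ S⁻¹`. -/
noncomputable def wordLength {G : Type*} [Group G] (S : Set G) (g : G) : ℕ :=
  sInf {n : ℕ | g ∈ (S ∪ S⁻¹) ^ n}

/-- `dist` on `G` is the word metric coming from the finite generating set `S`. -/
def IsWordMetric {G : Type*} [Group G] [MetricSpace G] (S : Set G) : Prop :=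
  S.Finite ∧ Subgroup.closure S = ⊤ ∧
    ∀ g h : G, dist g h = (wordLength S (g⁻¹ * h) : ℝ)

/-- `A` is coarsely contained in `B`: some `r ≥ 0` works so that every point of `A` is within
distance `r` of some point of `B`. -/
def CoarselyContained {X : Type*} [MetricSpace X] (A B : Set X) : Prop :=
  ∃ r : ℝ, 0 ≤ r ∧ ∀ a ∈ A, ∃ b ∈ B, dist a b ≤ r

/-! Left translations are isometries of a word metric and its closed balls are finite. So `H` is
coarsely contained in `K` exactly when right multiplication by one fixed finite set moves every
element of `H` into `K`, and this happens exactly when `H ⊓ K` has finitely many cosets in `H`. -/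

open Metric

namespace Subgroup

variable {G : Type*} [Group G] {H K : Subgroup G}

theorem finiteIndex_subgroupOf_of_exists_finite {T : Set G} (hT : T.Finite)
    (hcover : ∀ a ∈ H, ∃ t ∈ T, a * t ∈ K) : (K.subgroupOf H).FiniteIndex := by
  choose t htT htK using hcover
  have : Finite T := hT.to_subtype
  -- `t` separates right cosets of `K`, so we evaluate it at inverses to separate left cosets.
  let f : H ⧸ K.subgroupOf H → T := fun q ↦ ⟨t _ (q.out⁻¹).2, htT _ _⟩
  have hf : f.Injective := by
    intro q₁ q₂ hq
    have ht : t _ (q₁.out⁻¹).2 = t _ (q₂.out⁻¹).2 := congrArg Subtype.val hq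
    have hK := K.mul_mem (htK _ (q₁.out⁻¹).2) (K.inv_mem (htK _ (q₂.out⁻¹).2))
    rw [ht, mul_inv_rev, mul_assoc, mul_inv_cancel_left] at hK
    rw [← q₁.out_eq', ← q₂.out_eq', QuotientGroup.eq, mem_subgroupOf]
    simpa using hK
  have : Finite (H ⧸ K.subgroupOf H) := Finite.of_injective f hf
  exact finiteIndex_of_finite_quotient

theorem exists_finite_of_finiteIndex_subgroupOf [(K.subgroupOf H).FiniteIndex] :
    ∃ T : Set G, T.Finite ∧ ∀ a ∈ H, ∃ t ∈ T, a * t ∈ K := by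
  refine ⟨Set.range fun q : H ⧸ K.subgroupOf H ↦ (q.out : G), Set.finite_range _,
    fun a ha ↦ ⟨_, Set.mem_range_self (QuotientGroup.mk ⟨a, ha⟩⁻¹), ?_⟩⟩
  have hK := QuotientGroup.eq.mp (QuotientGroup.mk (s := K.subgroupOf H) ⟨a, ha⟩⁻¹).out_eq'
  rw [mem_subgroupOf] at hK
  simpa using K.inv_mem hK

theorem finiteIndex_subgroupOf_iff_exists_finite :
    (K.subgroupOf H).FiniteIndex ↔ ∃ T : Set G, T.Finite ∧ ∀ a ∈ H, ∃ t ∈ T, a * t ∈ K :=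
  ⟨fun _ ↦ exists_finite_of_finiteIndex_subgroupOf,
    fun ⟨_, hT, hcover⟩ ↦ finiteIndex_subgroupOf_of_exists_finite hT hcover⟩

end Subgroup

section LeftInvariantMetric

variable {G : Type*} [Group G] [MetricSpace G] [IsIsometricSMul G G]

theorem coarselyContained_iff_finiteIndex_subgroupOf
    (hball : ∀ r : ℝ, (closedBall (1 : G) r).Finite) (H K : Subgroup G) :
    CoarselyContained (H : Set G) K ↔ (K.subgroupOf H).FiniteIndex := by
  have dist_mul_right_self (a t : G) : dist a (a * t) = dist 1 t := by
    simpa using dist_mul_left a 1 t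
  rw [Subgroup.finiteIndex_subgroupOf_iff_exists_finite]
  constructor
  · rintro ⟨r, -, hcover⟩
    refine ⟨closedBall 1 r, hball r, fun a ha ↦ ?_⟩
    obtain ⟨b, hb, hab⟩ := hcover a ha
    refine ⟨a⁻¹ * b, ?_, by simpa using hb⟩
    rwa [mem_closedBall, dist_comm, ← dist_mul_right_self a, mul_inv_cancel_left]
  · rintro ⟨T, hT, hcover⟩
    obtain ⟨r, hr⟩ := hT.isBounded.subset_closedBall 1
    refine ⟨max r 0, le_max_right r 0, fun a ha ↦ ?_⟩
    obtain ⟨t, ht, hat⟩ := hcover a ha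
    refine ⟨a * t, hat, ?_⟩
    rw [dist_mul_right_self, dist_comm]
    exact (mem_closedBall.mp (hr ht)).trans (le_max_left r 0)

end LeftInvariantMetric

theorem Submonoid.exists_mem_pow_of_mem_closure {M : Type*} [Monoid M] {T : Set M} {x : M}
    (hx : x ∈ Submonoid.closure T) : ∃ n : ℕ, x ∈ T ^ n := by
  induction hx using Submonoid.closure_induction with
  | mem x hx => exact ⟨1, by simpa using hx⟩
  | one => exact ⟨0, by simp⟩
  | mul x y _ _ hx hy =>
    obtain ⟨m, hm⟩ := hx
    obtain ⟨n, hn⟩ := hy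
    exact ⟨m + n, pow_add T m n ▸ Set.mul_mem_mul hm hn⟩

section WordMetric

variable {G : Type*} [Group G] {S : Set G}

theorem mem_pow_wordLength (hS : Subgroup.closure S = ⊤) (g : G) :
    g ∈ (S ∪ S⁻¹) ^ wordLength S g := by
  have hg : g ∈ Submonoid.closure (S ∪ S⁻¹) := by
    rw [← Subgroup.closure_toSubmonoid, hS]
    trivial
  exact Nat.sInf_mem (Submonoid.exists_mem_pow_of_mem_closure hg)

theorem finite_setOf_wordLength_le (hfin : S.Finite) (hgen : Subgroup.closure S = ⊤)
    (n : ℕ) : {g : G | wordLength S g ≤ n}.Finite := by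
  have hT : (S ∪ S⁻¹).Finite := hfin.union hfin.inv
  refine ((Set.finite_Iic n).biUnion fun k _ ↦ ?_).subset fun g hg ↦
    Set.mem_biUnion (Set.mem_Iic.mpr hg) (mem_pow_wordLength hgen g)
  classical
  simpa using (hT.toFinset ^ k).finite_toSet

variable [MetricSpace G]

theorem IsWordMetric.isIsometricSMul (hS : IsWordMetric S) : IsIsometricSMul G G :=
  ⟨fun g ↦ Isometry.of_dist_eq fun x y ↦ by
    simp only [smul_eq_mul, hS.2.2, mul_inv_rev, mul_assoc, inv_mul_cancel_left]⟩

theorem IsWordMetric.finite_closedBall (hS : IsWordMetric S) (r : ℝ) :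
    (closedBall (1 : G) r).Finite := by
  refine (finite_setOf_wordLength_le hS.1 hS.2.1 ⌊r⌋₊).subset fun g hg ↦ ?_
  rw [mem_closedBall, dist_comm, hS.2.2, inv_one, one_mul] at hg
  exact Nat.le_floor hg

end WordMetric

/-- For subgroups `A, B` of a group `G` with a word metric, `A` and `B` are coarsely
equivalent (each coarsely contained in the other) iff they are commensurable, i.e. `A ∩ B`
has finite index in both `A` and `B`. -/
theorem coarselyEquivalent_iff_commensurable {G : Type*} [Group G] [MetricSpace G]
    (S : Set G) (hS : IsWordMetric S) (A B : Subgroup G) :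
    (CoarselyContained (A : Set G) (B : Set G) ∧ CoarselyContained (B : Set G) (A : Set G)) ↔
      (((A ⊓ B).subgroupOf A).FiniteIndex ∧ ((A ⊓ B).subgroupOf B).FiniteIndex) := by
  have := hS.isIsometricSMul
  rw [coarselyContained_iff_finiteIndex_subgroupOf hS.finite_closedBall,
    coarselyContained_iff_finiteIndex_subgroupOf hS.finite_closedBall,
    Subgroup.inf_subgroupOf_left, Subgroup.inf_subgroupOf_right]
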